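/- Let r: V→A be a (φ,ψ)-twisted O-operator on a Nambu-Poisson algebra (A, ·, {,,}) over a field k of characteristic 0 with respect to a representation (V;μ,ρ). Then V carries a Nambu-Poisson algebra structure with operations u·_r v := μ(r(u))v + μ(r(v))u + φ(r(u),r(v)) and {u,v,w}_r := ρ(r(u),r(v))w + ρ(r(v),r(w))u + ρ(r(w),r(u))v + ψ(r(u),r(v),r(w)), and with this structure r: (V, ·_r, {,,}_r) → (A, ·, {,,}) is a homomorphism of Nambu-Poisson algebras, i.e. r(u·_r v) = r(u)·r(v) and r({u,v,w}_r) = {r(u),r(v),r(w)}. -/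

import Mathlib

/-! Since `r` intertwines the induced operations on `V` with those of `A`, every
occurrence of `r (u ·_r v)` or `r {u,v,w}_r` inside an axiom for `V` can be replaced by
`r u · r v` or `{r u, r v, r w}`. Each axiom for `(V, ·_r, {,,}_r)` then becomes a sum of
instances of the representation axioms and the cocycle identities, evaluated at images of `r`. -/

namespace NPPaper

variable {A V : Type*} [AddCommGroup A] [AddCommGroup V]

/-- A commutative associative multiplication (axioms on a plain binary operation). -/
def IsCommAssocFun (m : A → A → A) : Prop :=
  (∀ a b, m a b = m b a) ∧ (∀ a b c, m (m a b) c = m a (m b c))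

/-- A 3-Lie bracket: skew-symmetric and satisfying the fundamental identity. -/
def IsThreeLieFun (br : A → A → A → A) : Prop :=
  (∀ a b c, br a b c = - br b a c) ∧ (∀ a b c, br a b c = - br a c b) ∧
  (∀ a b c d e, br a b (br c d e) =
      br (br a b c) d e + br c (br a b d) e + br c d (br a b e))

/-- A Nambu-Poisson structure: commutative associative product, 3-Lie bracket,
and the Leibniz rule. -/
def IsNambuPoissonFun (m : A → A → A) (br : A → A → A → A) : Prop :=
  IsCommAssocFun m ∧ IsThreeLieFun br ∧
  (∀ a b c d, br a b (m c d) = m (br a b c) d + m c (br a b d))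

/-- A representation of a 3-Lie algebra (pointwise form, skew-symmetry included). -/
def IsThreeLieRepFun (br : A → A → A → A) (ρ : A → A → V → V) : Prop :=
  (∀ a b v, ρ a b v = - ρ b a v) ∧
  (∀ a b c d v, ρ a b (ρ c d v) - ρ c d (ρ a b v) =
      ρ (br a b c) d v + ρ c (br a b d) v) ∧
  (∀ a b c d v, ρ (br a b c) d v =
      ρ a b (ρ c d v) + ρ b c (ρ a d v) + ρ c a (ρ b d v))

/-- A representation of a Nambu-Poisson algebra (pointwise form). -/
def IsNPRepFun (m : A → A → A) (br : A → A → A → A)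
    (μ : A → V → V) (ρ : A → A → V → V) : Prop :=
  (∀ a b v, μ (m a b) v = μ a (μ b v)) ∧
  IsThreeLieRepFun br ρ ∧
  (∀ a b c v, μ (br a b c) v = ρ a b (μ c v) - μ c (ρ a b v)) ∧
  (∀ a b c v, ρ a (m b c) v = μ b (ρ a c v) + μ c (ρ a b v))

/-- A Harrison 2-cocycle of a commutative associative algebra with coefficients
in a representation. -/
def IsHarrison2CocycleFun (m : A → A → A) (μ : A → V → V) (φ : A → A → V) : Prop :=
  (∀ a b, φ a b = φ b a) ∧
  (∀ a b c, μ a (φ b c) - φ (m a b) c + φ a (m b c) - μ c (φ a b) = 0)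

/-- A 2-cocycle of a 3-Lie algebra with coefficients in a representation. -/
def IsThreeLie2CocycleFun (br : A → A → A → A) (ρ : A → A → V → V)
    (ψ : A → A → A → V) : Prop :=
  (∀ a b c, ψ a b c = - ψ b a c) ∧ (∀ a b c, ψ a b c = - ψ a c b) ∧
  (∀ a b c d e, ψ a b (br c d e) + ρ a b (ψ c d e) =
      ψ (br a b c) d e + ψ c (br a b d) e + ψ c d (br a b e)
      + ρ d e (ψ a b c) + ρ e c (ψ a b d) + ρ c d (ψ a b e))

/-- A Nambu-Poisson 2-cocycle. -/
def IsNP2CocycleFun (m : A → A → A) (br : A → A → A → A)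
    (μ : A → V → V) (ρ : A → A → V → V)
    (φ : A → A → V) (ψ : A → A → A → V) : Prop :=
  IsHarrison2CocycleFun m μ φ ∧ IsThreeLie2CocycleFun br ρ ψ ∧
  (∀ a b c d, ψ a b (m c d) + ρ a b (φ c d) =
      φ c (br a b d) + μ c (ψ a b d) + φ (br a b c) d + μ d (ψ a b c))

/-- A Poisson algebra structure. -/
def IsPoissonFun (m : A → A → A) (pb : A → A → A) : Prop :=
  IsCommAssocFun m ∧
  (∀ a b, pb a b = - pb b a) ∧
  (∀ a b c, pb a (pb b c) = pb (pb a b) c + pb b (pb a c)) ∧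
  (∀ a b c, pb a (m b c) = m (pb a b) c + m b (pb a c))

/-- A representation of a Poisson algebra (pointwise form). -/
def IsPoissonRepFun (m : A → A → A) (pb : A → A → A) (μ ρb : A → V → V) : Prop :=
  (∀ a b v, μ (m a b) v = μ a (μ b v)) ∧
  (∀ a b v, ρb (pb a b) v = ρb a (ρb b v) - ρb b (ρb a v)) ∧
  (∀ a b v, μ (pb a b) v = ρb a (μ b v) - μ b (ρb a v)) ∧
  (∀ a b v, ρb (m a b) v = μ a (ρb b v) + μ b (ρb a v))

/-- A Poisson 2-cocycle. -/
def IsPoisson2CocycleFun (m pb : A → A → A) (μ ρb : A → V → V)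
    (φ ψb : A → A → V) : Prop :=
  IsHarrison2CocycleFun m μ φ ∧
  (∀ a b, ψb a b = - ψb b a) ∧
  (∀ a b c, ρb a (ψb b c) + ρb b (ψb c a) + ρb c (ψb a b)
      + ψb a (pb b c) + ψb b (pb c a) + ψb c (pb a b) = 0) ∧
  (∀ a b c, ψb a (m b c) + ρb a (φ b c) =
      φ b (pb a c) + μ b (ψb a c) + φ (pb a b) c + μ c (ψb a b))

/-- A Nijenhuis operator on a Nambu-Poisson algebra. -/
def IsNijenhuisFun (m : A → A → A) (br : A → A → A → A) (N : A → A) : Prop :=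
  (∀ a b, m (N a) (N b) = N (m (N a) b + m a (N b) - N (m a b))) ∧
  (∀ a b c, br (N a) (N b) (N c) =
      N (br (N a) (N b) c + br (N a) b (N c) + br a (N b) (N c)
        - N (br (N a) b c + br a (N b) c + br a b (N c) - N (br a b c))))

/-- The total multiplication `a ⊙ b = a ⋄ b + b ⋄ a + a * b` of an NS-commutative algebra. -/
def odotFun (d s : A → A → A) (a b : A) : A := d a b + d b a + s a b

/-- The total bracket `{{a,b,c}} = [a,b,c] + [b,c,a] + [c,a,b] + ⟦a,b,c⟧` of an NS-3-Lie algebra. -/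
def ttotFun (t l : A → A → A → A) (a b c : A) : A :=
  t a b c + t b c a + t c a b + l a b c

/-- An NS-commutative algebra. -/
def IsNSCommFun (d s : A → A → A) : Prop :=
  (∀ a b, s a b = s b a) ∧
  (∀ a b c, d a (d b c) = d (odotFun d s a b) c) ∧
  (∀ a b c, d a (s b c) + s a (odotFun d s b c) = d b (s a c) + s b (odotFun d s a c))

/-- An NS-3-Lie algebra. -/
def IsNSThreeLieFun (t l : A → A → A → A) : Prop :=
  (∀ a b c, t a b c = - t b a c) ∧
  (∀ a b c, l a b c = - l b a c) ∧ (∀ a b c, l a b c = - l a c b) ∧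
  (∀ a b c d e, t a b (t c d e) =
      t (ttotFun t l a b c) d e + t c (ttotFun t l a b d) e + t c d (t a b e)) ∧
  (∀ a b c d e, t (ttotFun t l a b c) d e =
      t a b (t c d e) + t b c (t a d e) + t c a (t b d e)) ∧
  (∀ a b c d e, l a b (ttotFun t l c d e) + t a b (l c d e) =
      l (ttotFun t l a b c) d e + l c (ttotFun t l a b d) e + l c d (ttotFun t l a b e)
      + t d e (l a b c) + t e c (l a b d) + t c d (l a b e))

/-- An NS-Nambu-Poisson algebra. -/
def IsNSNambuPoissonFun (d s : A → A → A) (t l : A → A → A → A) : Prop :=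
  IsNSCommFun d s ∧ IsNSThreeLieFun t l ∧
  (∀ a b c x, d (ttotFun t l a b c) x = t a b (d c x) - d c (t a b x)) ∧
  (∀ a b c x, t (odotFun d s a b) c x = d a (t b c x) + d b (t a c x)) ∧
  (∀ a b c x, l a b (odotFun d s c x) + t a b (s c x) =
      s c (ttotFun t l a b x) + d c (l a b x) + s (ttotFun t l a b c) x + d x (l a b c))

/-- A `(φ,ψ)`-twisted O-operator. -/
def IsTwistedOFun (m : A → A → A) (br : A → A → A → A)
    (μ : A → V → V) (ρ : A → A → V → V)
    (φ : A → A → V) (ψ : A → A → A → V) (r : V → A) : Prop :=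
  (∀ u v, m (r u) (r v) = r (μ (r u) v + μ (r v) u + φ (r u) (r v))) ∧
  (∀ u v w, br (r u) (r v) (r w) =
      r (ρ (r u) (r v) w + ρ (r v) (r w) u + ρ (r w) (r u) v + ψ (r u) (r v) (r w)))

section TwistedStructure

variable {R : Type*} [CommSemiring R] [Module R A] [Module R V]

def twistedMul (μ : A →ₗ[R] V →ₗ[R] V) (φ : A →ₗ[R] A →ₗ[R] V) (r : V →ₗ[R] A)
    (u v : V) : V :=
  μ (r u) v + μ (r v) u + φ (r u) (r v)

def twistedBracket (ρ : A →ₗ[R] A →ₗ[R] V →ₗ[R] V) (ψ : A →ₗ[R] A →ₗ[R] A →ₗ[R] V)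
    (r : V →ₗ[R] A) (u v w : V) : V :=
  ρ (r u) (r v) w + ρ (r v) (r w) u + ρ (r w) (r u) v + ψ (r u) (r v) (r w)

variable {m : A →ₗ[R] A →ₗ[R] A} {br : A →ₗ[R] A →ₗ[R] A →ₗ[R] A}
  {μ : A →ₗ[R] V →ₗ[R] V} {ρ : A →ₗ[R] A →ₗ[R] V →ₗ[R] V}
  {φ : A →ₗ[R] A →ₗ[R] V} {ψ : A →ₗ[R] A →ₗ[R] A →ₗ[R] V} {r : V →ₗ[R] A}

theorem mu_mu_comm (hm : ∀ a b, m a b = m b a) (hμ : ∀ a b v, μ (m a b) v = μ a (μ b v))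
    (a b : A) (v : V) : μ a (μ b v) = μ b (μ a v) := by
  rw [← hμ, hm, hμ]

theorem rho_mul_left (hρs : ∀ a b v, ρ a b v = -ρ b a v)
    (hρm : ∀ a b c v, ρ a (m b c) v = μ b (ρ a c v) + μ c (ρ a b v)) (a b c : A) (v : V) :
    ρ (m b c) a v = μ b (ρ c a v) + μ c (ρ b a v) := by
  rw [hρs, hρm, hρs a c, hρs a b, map_neg, map_neg]
  abel

theorem rho_bracket_right (hρs : ∀ a b v, ρ a b v = -ρ b a v)
    (hρ3 : ∀ a b c d v, ρ (br a b c) d v = ρ a b (ρ c d v) + ρ b c (ρ a d v) + ρ c a (ρ b d v))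
    (a b c d : A) (v : V) :
    ρ a (br b c d) v = ρ b c (ρ a d v) + ρ c d (ρ a b v) + ρ d b (ρ a c v) := by
  rw [hρs a, hρ3, hρs d a, hρs b a, hρs c a, map_neg, map_neg, map_neg]
  abel

theorem twistedMul_comm (hφ : ∀ a b, φ a b = φ b a) (u v : V) :
    twistedMul μ φ r u v = twistedMul μ φ r v u := by
  rw [twistedMul, twistedMul, hφ]
  abel

theorem twistedMul_assoc (hm : ∀ a b, m a b = m b a)
    (hμ : ∀ a b v, μ (m a b) v = μ a (μ b v))
    (hφ : ∀ a b c, μ a (φ b c) - φ (m a b) c + φ a (m b c) - μ c (φ a b) = 0)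
    (hr : ∀ u v, m (r u) (r v) = r (twistedMul μ φ r u v)) (u v w : V) :
    twistedMul μ φ r (twistedMul μ φ r u v) w = twistedMul μ φ r u (twistedMul μ φ r v w) := by
  simp only [twistedMul] at hr ⊢
  rw [← hr u v, ← hr v w]
  simp only [map_add]
  linear_combination (norm := abel) hμ (r u) (r v) w + mu_mu_comm hm hμ (r w) (r u) v
    + mu_mu_comm hm hμ (r w) (r v) u - hμ (r v) (r w) u - hφ (r u) (r v) (r w)

theorem twistedBracket_swap_left (hρs : ∀ a b v, ρ a b v = -ρ b a v)
    (hψ : ∀ a b c, ψ a b c = -ψ b a c) (u v w : V) :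
    twistedBracket ρ ψ r u v w = -twistedBracket ρ ψ r v u w := by
  simp only [twistedBracket]
  linear_combination (norm := abel) hρs (r u) (r v) w + hρs (r w) (r u) v
    + hρs (r v) (r w) u + hψ (r u) (r v) (r w)

theorem twistedBracket_swap_right (hρs : ∀ a b v, ρ a b v = -ρ b a v)
    (hψ : ∀ a b c, ψ a b c = -ψ a c b) (u v w : V) :
    twistedBracket ρ ψ r u v w = -twistedBracket ρ ψ r u w v := by
  simp only [twistedBracket]
  linear_combination (norm := abel) hρs (r u) (r v) w + hρs (r v) (r w) u
    + hρs (r w) (r u) v + hψ (r u) (r v) (r w)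

theorem twistedBracket_fundamental (hρs : ∀ a b v, ρ a b v = -ρ b a v)
    (hρFI : ∀ a b c d v, ρ a b (ρ c d v) - ρ c d (ρ a b v) =
      ρ (br a b c) d v + ρ c (br a b d) v)
    (hρ3 : ∀ a b c d v, ρ (br a b c) d v = ρ a b (ρ c d v) + ρ b c (ρ a d v) + ρ c a (ρ b d v))
    (hψ : ∀ a b c d e, ψ a b (br c d e) + ρ a b (ψ c d e) =
      ψ (br a b c) d e + ψ c (br a b d) e + ψ c d (br a b e)
      + ρ d e (ψ a b c) + ρ e c (ψ a b d) + ρ c d (ψ a b e))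
    (hr : ∀ u v w, br (r u) (r v) (r w) = r (twistedBracket ρ ψ r u v w)) (u v x y z : V) :
    twistedBracket ρ ψ r u v (twistedBracket ρ ψ r x y z) =
      twistedBracket ρ ψ r (twistedBracket ρ ψ r u v x) y z
      + twistedBracket ρ ψ r x (twistedBracket ρ ψ r u v y) z
      + twistedBracket ρ ψ r x y (twistedBracket ρ ψ r u v z) := by
  simp only [twistedBracket] at hr ⊢
  rw [← hr x y z, ← hr u v x, ← hr u v y, ← hr u v z]
  simp only [map_add]
  linear_combination (norm := abel) hρFI (r u) (r v) (r x) (r y) z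
    + hρFI (r u) (r v) (r y) (r z) x + hρFI (r u) (r v) (r z) (r x) y
    + rho_bracket_right hρs hρ3 (r v) (r x) (r y) (r z) u + hρ3 (r x) (r y) (r z) (r u) v
    + hψ (r u) (r v) (r x) (r y) (r z)

theorem twistedBracket_twistedMul (hρs : ∀ a b v, ρ a b v = -ρ b a v)
    (hμbr : ∀ a b c v, μ (br a b c) v = ρ a b (μ c v) - μ c (ρ a b v))
    (hρm : ∀ a b c v, ρ a (m b c) v = μ b (ρ a c v) + μ c (ρ a b v))
    (hmix : ∀ a b c d, ψ a b (m c d) + ρ a b (φ c d) =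
      φ c (br a b d) + μ c (ψ a b d) + φ (br a b c) d + μ d (ψ a b c))
    (hrm : ∀ u v, m (r u) (r v) = r (twistedMul μ φ r u v))
    (hrbr : ∀ u v w, br (r u) (r v) (r w) = r (twistedBracket ρ ψ r u v w)) (u v x y : V) :
    twistedBracket ρ ψ r u v (twistedMul μ φ r x y) =
      twistedMul μ φ r (twistedBracket ρ ψ r u v x) y
      + twistedMul μ φ r x (twistedBracket ρ ψ r u v y) := by
  simp only [twistedMul, twistedBracket] at hrm hrbr ⊢
  rw [← hrm x y, ← hrbr u v x, ← hrbr u v y]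
  simp only [map_add]
  linear_combination (norm := abel) -hμbr (r u) (r v) (r x) y - hμbr (r u) (r v) (r y) x
    + hρm (r v) (r x) (r y) u + rho_mul_left hρs hρm (r u) (r x) (r y) v
    + hmix (r u) (r v) (r x) (r y)

end TwistedStructure

theorem statement18_general {k : Type*} [Field k]
    {A : Type*} [AddCommGroup A] [Module k A]
    {V : Type*} [AddCommGroup V] [Module k V]
    (m : A →ₗ[k] A →ₗ[k] A) (br : A →ₗ[k] A →ₗ[k] A →ₗ[k] A)
    (μ : A →ₗ[k] V →ₗ[k] V) (ρ : A →ₗ[k] A →ₗ[k] V →ₗ[k] V)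
    (φ : A →ₗ[k] A →ₗ[k] V) (ψ : A →ₗ[k] A →ₗ[k] A →ₗ[k] V)
    (hA : IsNambuPoissonFun (fun a b => m a b) (fun a b c => br a b c))
    (hrep : IsNPRepFun (fun a b => m a b) (fun a b c => br a b c)
        (fun a v => μ a v) (fun a b v => ρ a b v))
    (hcoc : IsNP2CocycleFun (fun a b => m a b) (fun a b c => br a b c)
        (fun a v => μ a v) (fun a b v => ρ a b v)
        (fun a b => φ a b) (fun a b c => ψ a b c))
    (r : V →ₗ[k] A)
    (hr : IsTwistedOFun (fun a b => m a b) (fun a b c => br a b c)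
        (fun a v => μ a v) (fun a b v => ρ a b v)
        (fun a b => φ a b) (fun a b c => ψ a b c) (fun v => r v)) :
    IsNambuPoissonFun
        (fun u v => μ (r u) v + μ (r v) u + φ (r u) (r v))
        (fun u v w => ρ (r u) (r v) w + ρ (r v) (r w) u + ρ (r w) (r u) v
          + ψ (r u) (r v) (r w))
      ∧ (∀ u v, r (μ (r u) v + μ (r v) u + φ (r u) (r v)) = m (r u) (r v))
      ∧ (∀ u v w, r (ρ (r u) (r v) w + ρ (r v) (r w) u + ρ (r w) (r u) v
            + ψ (r u) (r v) (r w)) = br (r u) (r v) (r w)) := by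
  obtain ⟨hμ, ⟨hρs, hρFI, hρ3⟩, hμbr, hρm⟩ := hrep
  obtain ⟨⟨hφs, hφ⟩, ⟨hψ₁, hψ₂, hψ⟩, hmix⟩ := hcoc
  obtain ⟨hrm, hrbr⟩ := hr
  refine ⟨⟨⟨twistedMul_comm hφs, twistedMul_assoc hA.1.1 hμ hφ hrm⟩,
      ⟨twistedBracket_swap_left hρs hψ₁, twistedBracket_swap_right hρs hψ₂,
        twistedBracket_fundamental hρs hρFI hρ3 hψ hrbr⟩,
      twistedBracket_twistedMul hρs hμbr hρm hmix hrm hrbr⟩,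
    fun u v => (hrm u v).symm, fun u v w => (hrbr u v w).symm⟩

theorem statement18 {k : Type*} [Field k] [CharZero k]
    {A : Type*} [AddCommGroup A] [Module k A]
    {V : Type*} [AddCommGroup V] [Module k V]
    (m : A →ₗ[k] A →ₗ[k] A) (br : A →ₗ[k] A →ₗ[k] A →ₗ[k] A)
    (μ : A →ₗ[k] V →ₗ[k] V) (ρ : A →ₗ[k] A →ₗ[k] V →ₗ[k] V)
    (φ : A →ₗ[k] A →ₗ[k] V) (ψ : A →ₗ[k] A →ₗ[k] A →ₗ[k] V)
    (hA : IsNambuPoissonFun (fun a b => m a b) (fun a b c => br a b c))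
    (hrep : IsNPRepFun (fun a b => m a b) (fun a b c => br a b c)
        (fun a v => μ a v) (fun a b v => ρ a b v))
    (hcoc : IsNP2CocycleFun (fun a b => m a b) (fun a b c => br a b c)
        (fun a v => μ a v) (fun a b v => ρ a b v)
        (fun a b => φ a b) (fun a b c => ψ a b c))
    (r : V →ₗ[k] A)
    (hr : IsTwistedOFun (fun a b => m a b) (fun a b c => br a b c)
        (fun a v => μ a v) (fun a b v => ρ a b v)
        (fun a b => φ a b) (fun a b c => ψ a b c) (fun v => r v)) :
    IsNambuPoissonFun
        (fun u v => μ (r u) v + μ (r v) u + φ (r u) (r v))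
        (fun u v w => ρ (r u) (r v) w + ρ (r v) (r w) u + ρ (r w) (r u) v
          + ψ (r u) (r v) (r w))
      ∧ (∀ u v, r (μ (r u) v + μ (r v) u + φ (r u) (r v)) = m (r u) (r v))
      ∧ (∀ u v w, r (ρ (r u) (r v) w + ρ (r v) (r w) u + ρ (r w) (r u) v
            + ψ (r u) (r v) (r w)) = br (r u) (r v) (r w)) :=
  statement18_general m br μ ρ φ ψ hA hrep hcoc r hr

end NPPaper
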